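/- arXiv:2202.11853 — 3 statements merged into one kernel-verified Lean document; each statement's English description precedes it below -/
import Mathlib

section
/- Let A, E_X, E be independent real random variables with positive, third-order differentiable log-densities f1 = log p_A, f2 = log p_{E_X}, f3 = log p_E. Let q, b, c, d, α, β be real constants with c ≠ 0, β ≠ 0, and qc + bd ≠ 0. Define X = qA + E_X, Ŷ = αA + βX, Y = cX + bdA + E. If Ŷ is conditionally independent of A given Y, then both E_X and E are Gaussian. -/
open MeasureTheory

/-!
With `U = ŷ/β - ᾱa` and `V = y - r̄a - c̄ŷ`, the mixed partial `∂²J/∂a∂ŷ` equals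
`r̄c̄ f₃''(V) - (ᾱ/β) f₂''(U)`. Since `(a, ŷ, y) ↦ (U, V)` is onto, its vanishing separates the
variables: `(ᾱ/β) f₂''` and `r̄c̄ f₃''` are one and the same constant. The two coefficients are not
both zero because `qc + bd ≠ 0`. Neither `f₂''` nor `f₃''` vanishes identically, since `exp` of
an affine function is not integrable while `∫ exp f = 1` excludes non-integrability (the Bochner
integral would be `0`). Hence both coefficients are nonzero, `f₂''` and `f₃''` are constant, and
the same integrability argument makes both quadratics open downwards.
-/

lemma not_integrable_exp_affine (p r : ℝ) : ¬Integrable fun x => Real.exp (p * x + r) := by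
  wlog hp : 0 ≤ p generalizing p
  · intro h
    exact this (-p) (by linarith) (by simpa using h.comp_neg)
  intro h
  have hconst : IntegrableOn (fun _ : ℝ => Real.exp r) (Set.Ici 0) := by
    refine h.integrableOn.mono' aestronglyMeasurable_const ?_
    filter_upwards [ae_restrict_mem measurableSet_Ici] with x (hx : 0 ≤ x)
    rw [Real.norm_of_nonneg (Real.exp_pos r).le, Real.exp_le_exp]
    nlinarith
  simp [integrableOn_const_iff, Real.volume_Ici] at hconst

lemma neg_of_integral_exp_eq_one {f : ℝ → ℝ} {a b c : ℝ}
    (hf : ∀ x, f x = a * x ^ 2 + b * x + c) (hdens : ∫ x, Real.exp (f x) = 1) : a < 0 := by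
  by_contra! ha
  have hni : ¬Integrable fun x => Real.exp (f x) := fun hi =>
    not_integrable_exp_affine b c <| hi.mono' (by fun_prop : Continuous _).aestronglyMeasurable <|
      Filter.Eventually.of_forall fun x => by
        rw [Real.norm_of_nonneg (Real.exp_pos _).le, Real.exp_le_exp, hf]
        nlinarith [sq_nonneg x]
  simp [integral_undef hni] at hdens

lemma eq_affine_of_deriv_eq_const {f : ℝ → ℝ} {k : ℝ} (hf : Differentiable ℝ f)
    (h : ∀ x, deriv f x = k) (x : ℝ) : f x = k * x + f 0 := by
  have hderiv : ∀ x, HasDerivAt (fun x => f x - k * x) 0 x := fun x =>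
    ((hf x).hasDerivAt.sub ((hasDerivAt_id' x).const_mul k)).congr_deriv (by rw [h]; ring)
  have := is_const_of_deriv_eq_zero (fun x => (hderiv x).differentiableAt)
    (fun x => (hderiv x).deriv) x 0
  simp only [mul_zero, sub_zero] at this
  linarith

lemma eq_quadratic_of_deriv_deriv_eq_const {f : ℝ → ℝ} {k : ℝ} (hf : Differentiable ℝ f)
    (hf' : Differentiable ℝ (deriv f)) (h : ∀ x, deriv (deriv f) x = k) (x : ℝ) :
    f x = k / 2 * x ^ 2 + deriv f 0 * x + f 0 := by
  have hderiv : ∀ x, HasDerivAt (fun x => f x - k / 2 * x ^ 2) (deriv f 0) x := fun x =>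
    ((hf x).hasDerivAt.sub ((hasDerivAt_pow 2 x).const_mul (k / 2))).congr_deriv
      (by rw [eq_affine_of_deriv_eq_const hf' h x]; ring)
  have := eq_affine_of_deriv_eq_const (fun x => (hderiv x).differentiableAt)
    (fun x => (hderiv x).deriv) x
  simp only [zero_pow two_ne_zero, mul_zero, sub_zero] at this
  linarith

def IsGaussianLogDensity (f : ℝ → ℝ) : Prop :=
  ∃ a b c : ℝ, a < 0 ∧ ∀ x, f x = a * x ^ 2 + b * x + c

lemma isGaussianLogDensity_of_deriv_deriv_eq_const {f : ℝ → ℝ} {k : ℝ} (hf : ContDiff ℝ 2 f)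
    (hdens : ∫ x, Real.exp (f x) = 1) (h : ∀ x, deriv (deriv f) x = k) :
    IsGaussianLogDensity f :=
  have hquad := eq_quadratic_of_deriv_deriv_eq_const (hf.differentiable two_ne_zero)
    hf.differentiable_deriv_two h
  ⟨_, _, _, neg_of_integral_exp_eq_one hquad hdens, hquad⟩

lemma exists_deriv_deriv_ne_zero {f : ℝ → ℝ} (hf : ContDiff ℝ 2 f)
    (hdens : ∫ x, Real.exp (f x) = 1) : ∃ x, deriv (deriv f) x ≠ 0 := by
  by_contra! h
  have := neg_of_integral_exp_eq_one (eq_quadratic_of_deriv_deriv_eq_const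
    (hf.differentiable two_ne_zero) hf.differentiable_deriv_two h) hdens
  norm_num at this

lemma apply_eq_apply_zero_of_mul_eq_mul {g h : ℝ → ℝ} {k l : ℝ}
    (hgh : ∀ x y, g x * k = h y * l) (hkl : k ≠ 0 ∨ l ≠ 0) (hh : ∃ y, h y ≠ 0) (x : ℝ) :
    g x = g 0 := by
  have hk : k ≠ 0 := by
    rintro rfl
    obtain ⟨y, hy⟩ := hh
    have hl : l = 0 := by simpa [hy, eq_comm] using hgh 0 y
    exact hkl.elim (absurd rfl) (absurd hl)
  exact mul_right_cancel₀ hk ((hgh x 0).trans (hgh 0 0).symm)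

lemma deriv_deriv_logJoint (f1 : ℝ → ℝ) {f2 f3 : ℝ → ℝ} (hf2 : ContDiff ℝ 2 f2)
    (hf3 : ContDiff ℝ 2 f3) (A R C β L y yh a : ℝ) :
    deriv (fun a' =>
        deriv (fun t => f1 a' + f2 (t / β - A * a') + f3 (y - R * a' - C * t) - L) yh) a
      = R * C * deriv (deriv f3) (y - R * a - C * yh)
        - A / β * deriv (deriv f2) (yh / β - A * a) := by
  have inner : ∀ a', deriv (fun t => f1 a' + f2 (t / β - A * a') + f3 (y - R * a' - C * t) - L) yh
      = deriv f2 (yh / β - A * a') / β - C * deriv f3 (y - R * a' - C * yh) := fun a' => by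
    have h2 := (hf2.differentiable two_ne_zero (yh / β - A * a')).hasDerivAt.comp yh
      (((hasDerivAt_id' yh).div_const β).sub_const (A * a'))
    have h3 := (hf3.differentiable two_ne_zero (y - R * a' - C * yh)).hasDerivAt.comp yh
      (((hasDerivAt_id' yh).const_mul C).const_sub (y - R * a'))
    exact (((h2.const_add (f1 a')).add h3).sub_const L).deriv.trans (by ring)
  simp only [inner]
  have h2 := (hf2.differentiable_deriv_two (yh / β - A * a)).hasDerivAt.comp a
    (((hasDerivAt_id' a).const_mul A).const_sub (yh / β))
  have h3 := (hf3.differentiable_deriv_two (y - R * a - C * yh)).hasDerivAt.comp a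
    ((((hasDerivAt_id' a).const_mul R).const_sub y).sub_const (C * yh))
  exact ((h2.div_const β).sub (h3.const_mul C)).deriv.trans (by ring)

/-- Unattainability of Equalized Odds in the linear non-Gaussian case.
`f1, f2, f3` are the log-densities of the independent variables `A, E_X, E`,
with `X = qA + E_X`, `Ŷ = αA + βX`, `Y = cX + bdA + E`.  The log joint density
of `(A, Ŷ, Y)` is
`J(a,yh,y) = f1 a + f2 (yh/β - αb a) + f3 (y - rb a - cb yh) - log |β|` with
`αb = (α + qβ)/β`, `rb = bd - cα/β`, `cb = c/β`, and conditional independence of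
`Ŷ` and `A` given `Y` is equivalent to the vanishing of the mixed partial
`∂²J/∂a∂yh`.  Under these conditions, both `E_X` and `E` must be Gaussian,
i.e. `f2` and `f3` are quadratic with negative leading coefficients. -/
theorem stmt4 (f1 f2 f3 : ℝ → ℝ) (q b c d α β : ℝ)
    (hc : c ≠ 0) (hβ : β ≠ 0) (hqcbd : q * c + b * d ≠ 0)
    (hf2 : ContDiff ℝ 3 f2) (hf3 : ContDiff ℝ 3 f3)
    (hf2dens : (∫ x, Real.exp (f2 x)) = 1)
    (hf3dens : (∫ x, Real.exp (f3 x)) = 1)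
    (hCI : ∀ a yh y : ℝ,
      deriv (fun a' =>
        deriv (fun t =>
          f1 a' + f2 (t / β - ((α + q * β) / β) * a')
            + f3 (y - (b * d - c * α / β) * a' - (c / β) * t)
            - Real.log |β|) yh) a = 0) :
    (∃ a2 b2 c2 : ℝ, a2 < 0 ∧ ∀ x, f2 x = a2 * x ^ 2 + b2 * x + c2) ∧
    (∃ a3 b3 c3 : ℝ, a3 < 0 ∧ ∀ x, f3 x = a3 * x ^ 2 + b3 * x + c3) := by
  have hf2' : ContDiff ℝ 2 f2 := hf2.of_le (by norm_num)
  have hf3' : ContDiff ℝ 2 f3 := hf3.of_le (by norm_num)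
  have hsep : ∀ U V, deriv (deriv f2) U * ((α + q * β) / β / β)
      = deriv (deriv f3) V * ((b * d - c * α / β) * (c / β)) := fun U V => by
    -- the point (a, ŷ, y) = (0, βU, V + cU) puts f₂'' at U and f₃'' at V
    have h := hCI 0 (β * U) (V + c / β * (β * U))
    rw [deriv_deriv_logJoint f1 hf2' hf3', mul_div_cancel_left₀ U hβ] at h
    simp only [mul_zero, sub_zero, add_sub_cancel_right] at h
    linarith
  have hk : (α + q * β) / β / β ≠ 0 ∨ (b * d - c * α / β) * (c / β) ≠ 0 := by
    by_contra! ⟨hA, hR⟩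
    simp only [div_eq_zero_iff, hβ, or_false, mul_eq_zero, hc, sub_eq_zero] at hA hR
    field_simp at hR
    exact hqcbd (mul_right_cancel₀ hβ (by linear_combination c * hA + hR))
  exact ⟨isGaussianLogDensity_of_deriv_deriv_eq_const hf2' hf2dens
      (apply_eq_apply_zero_of_mul_eq_mul hsep hk (exists_deriv_deriv_ne_zero hf3' hf3dens)),
    isGaussianLogDensity_of_deriv_deriv_eq_const hf3' hf3dens
      (apply_eq_apply_zero_of_mul_eq_mul (fun U V => (hsep V U).symm) hk.symm
        (exists_deriv_deriv_ne_zero hf2' hf2dens))⟩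
end

section
/- Under the same linear model with both E_X and E Gaussian with variances σ_{E_X}² and σ_E², the predictor Ŷ = αA + βX (β ≠ 0) is conditionally independent of A given Y if and only if α/β = (bdc·σ_{E_X}² − q·σ_E²)/(c²·σ_{E_X}² + σ_E²). -/
/-! Writing `t = α / β`, the curvature condition is linear in `t`: multiplying it by
`-β² σX² σE²` turns it into `(bd - ct) c σX² = (t + q) σE²`, which is solved by dividing by
the positive number `c² σX² + σE²`. -/

lemma eq_div_iff_of_balance {b c d q t σX σE : ℝ} (hden : c ^ 2 * σX ^ 2 + σE ^ 2 ≠ 0) :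
    (b * d - c * t) * c * σX ^ 2 = (t + q) * σE ^ 2 ↔
      t = (b * d * c * σX ^ 2 - q * σE ^ 2) / (c ^ 2 * σX ^ 2 + σE ^ 2) := by
  rw [eq_div_iff hden]
  constructor <;> intro h <;> linear_combination -h

lemma curvature_condition_iff_balance {b c d q α β σX σE : ℝ}
    (hβ : β ≠ 0) (hσX : σX ≠ 0) (hσE : σE ≠ 0) :
    (b * d - c * α / β) * (c / β) * (-(1 / σE ^ 2))
        = (((α + q * β) / β) / β) * (-(1 / σX ^ 2)) ↔
      (b * d - c * (α / β)) * c * σX ^ 2 = (α / β + q) * σE ^ 2 := by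
  constructor <;> intro h <;> field_simp at h ⊢ <;> linear_combination -h

theorem stmt5_general (q b c d α β σX σE : ℝ)
    (hβ : β ≠ 0)
    (hσX : 0 < σX) (hσE : 0 < σE) :
    ((b * d - c * α / β) * (c / β) * (-(1 / σE ^ 2))
        = (((α + q * β) / β) / β) * (-(1 / σX ^ 2))) ↔
      α / β = (b * d * c * σX ^ 2 - q * σE ^ 2) / (c ^ 2 * σX ^ 2 + σE ^ 2) := by
  rw [curvature_condition_iff_balance hβ hσX.ne' hσE.ne']
  exact eq_div_iff_of_balance (by positivity)

/-- In the linear Gaussian model (`X = qA + E_X`, `Y = cX + bdA + E`,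
`Ŷ = αA + βX`, with `E_X`, `E` Gaussian with variances `σX²`, `σE²`),
conditional independence of `Ŷ` and `A` given `Y` is equivalent (for positive
smooth densities) to `r̄c̄ · f3'' = (ᾱ/β) · f2''` where `f2'' = -1/σX²`,
`f3'' = -1/σE²`, `ᾱ = (α+qβ)/β`, `r̄ = bd - cα/β`, `c̄ = c/β`; this holds iff
`α/β = (bdc·σX² - q·σE²)/(c²·σX² + σE²)`. -/
theorem stmt5 (q b c d α β σX σE : ℝ)
    (hc : c ≠ 0) (hβ : β ≠ 0) (hqcbd : q * c + b * d ≠ 0)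
    (hσX : 0 < σX) (hσE : 0 < σE) :
    ((b * d - c * α / β) * (c / β) * (-(1 / σE ^ 2))
        = (((α + q * β) / β) / β) * (-(1 / σX ^ 2))) ↔
      α / β = (b * d * c * σX ^ 2 - q * σE ^ 2) / (c ^ 2 * σX ^ 2 + σE ^ 2) :=
  stmt5_general q b c d α β σX σE hβ hσX hσE
end

section
/- Let Ŷ be a binary predictor of a binary target Y with protected attribute A taking finitely many values. For each a, let γ_a(Ŷ) = (FPR_a, TPR_a) = (P(Ŷ=1|A=a,Y=0), P(Ŷ=1|A=a,Y=1)), and suppose there is ε > 0 such that TPR_a − FPR_a ≥ ε for all a. Let C_a be the convex hull of {(0,0), γ_a(Ŷ), (1,1) − γ_a(Ŷ) reflected appropriately, (1,1)}, i.e., C_a = conv{(0,0), (FPR_a, TPR_a), (1−FPR_a, 1−TPR_a), (1,1)}. Then the intersection ∩_a C_a contains a point (u, v) with v − u > 0, i.e., a point strictly above the diagonal. -/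
/-!
Each `C_a` is the parallelogram spanned by `u = γ a` and `v = (1, 1) - γ a`, i.e. the set of
`s • u + t • v` with `s, t ∈ [0, 1]`. Writing `γ a = (x, y)`, the point `(1/2 - δ, 1/2 + δ)` is
`s • u + t • v` exactly when `(s - t) (y - x) = 2 δ` and `(s - t) (x + y) + 2 t = 1`. Taking
`δ = ε / 4` forces `s - t ≤ 1/2` because `y - x ≥ ε`, which keeps `s` and `t` in `[0, 1]` for
every `a` simultaneously.
-/

open Set Pointwise

theorem smul_mem_convexHull_zero_pair {E : Type*} [AddCommGroup E] [Module ℝ E] (u : E)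
    {s : ℝ} (hs : s ∈ Icc (0 : ℝ) 1) : s • u ∈ convexHull ℝ {0, u} := by
  rw [convexHull_pair]
  exact ⟨1 - s, s, by linarith [hs.2], hs.1, by ring, by simp⟩

theorem smul_add_smul_mem_convexHull_parallelogram {E : Type*} [AddCommGroup E] [Module ℝ E]
    (u v : E) {s t : ℝ} (hs : s ∈ Icc (0 : ℝ) 1) (ht : t ∈ Icc (0 : ℝ) 1) :
    s • u + t • v ∈ convexHull ℝ {0, u, v, u + v} := by
  have hsub : ({0, u} + {0, v} : Set E) ⊆ {0, u, v, u + v} := by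
    rintro _ ⟨a, ha, b, hb, rfl⟩
    rcases ha with rfl | rfl <;> rcases hb with rfl | rfl <;> simp
  refine convexHull_mono hsub ?_
  rw [convexHull_add]
  exact add_mem_add (smul_mem_convexHull_zero_pair u hs) (smul_mem_convexHull_zero_pair v ht)

theorem mem_convexHull_roc_of_le_sub {x y ε : ℝ} (hε : 0 < ε)
    (hx : x ∈ Icc (0 : ℝ) 1) (hy : y ∈ Icc (0 : ℝ) 1) (hxy : ε ≤ y - x) :
    (1 / 2 - ε / 4, 1 / 2 + ε / 4) ∈ convexHull ℝ
      ({((0 : ℝ), (0 : ℝ)), (x, y), ((1 : ℝ), (1 : ℝ)) - (x, y), ((1 : ℝ), (1 : ℝ))} :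
        Set (ℝ × ℝ)) := by
  obtain ⟨hx0, hx1⟩ := hx
  obtain ⟨hy0, hy1⟩ := hy
  have hgap : 0 < y - x := hε.trans_le hxy
  set r := ε / (2 * (y - x)) with hr
  have hr_pos : 0 < r := by positivity
  have hr_half : r ≤ 1 / 2 := by
    rw [hr, div_le_iff₀ (by linarith)]; linarith
  have hr_mul : r * (y - x) = ε / 2 := by
    rw [hr]; field_simp
  clear_value r
  have hlo : r * (x + y) ≤ 1 := by nlinarith
  have hhi : r * (2 - x - y) ≤ 1 := by nlinarith
  have key := smul_add_smul_mem_convexHull_parallelogram ((x, y) : ℝ × ℝ) ((1, 1) - (x, y))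
    (s := (1 - r * (x + y)) / 2 + r) (t := (1 - r * (x + y)) / 2)
    ⟨by nlinarith, by linarith⟩ ⟨by linarith, by nlinarith⟩
  rw [add_sub_cancel, ← Prod.mk_zero_zero] at key
  convert key using 1
  ext <;> simp only [Prod.smul_mk, smul_eq_mul, Prod.mk_sub_mk, Prod.mk_add_mk]
  · linear_combination (1 / 2) * hr_mul
  · linear_combination (-1 / 2) * hr_mul

theorem stmt13_general {𝒜 : Type*}
    (γ : 𝒜 → ℝ × ℝ) (ε : ℝ) (hε : 0 < ε)
    (hbox : ∀ a, (γ a).1 ∈ Set.Icc (0 : ℝ) 1 ∧ (γ a).2 ∈ Set.Icc (0 : ℝ) 1)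
    (hsep : ∀ a, ε ≤ (γ a).2 - (γ a).1) :
    ∃ p : ℝ × ℝ,
      (∀ a, p ∈ convexHull ℝ
        ({((0 : ℝ), (0 : ℝ)), γ a, ((1 : ℝ), (1 : ℝ)) - γ a,
          ((1 : ℝ), (1 : ℝ))} : Set (ℝ × ℝ))) ∧ p.1 < p.2 := by
  refine ⟨(1 / 2 - ε / 4, 1 / 2 + ε / 4), fun a => ?_, by dsimp only; linarith⟩
  exact mem_convexHull_roc_of_le_sub hε (hbox a).1 (hbox a).2 (hsep a)

/-- If for every group `a` the ROC point `γ a = (FPR_a, TPR_a) ∈ [0,1]²` lies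
at least `ε > 0` above the diagonal, then the intersection of the ROC convex
hulls `C_a = conv{(0,0), γ a, (1,1) - γ a, (1,1)}` contains a point strictly
above the diagonal. -/
theorem stmt13 {𝒜 : Type*} [Fintype 𝒜] [Nonempty 𝒜]
    (γ : 𝒜 → ℝ × ℝ) (ε : ℝ) (hε : 0 < ε)
    (hbox : ∀ a, (γ a).1 ∈ Set.Icc (0 : ℝ) 1 ∧ (γ a).2 ∈ Set.Icc (0 : ℝ) 1)
    (hsep : ∀ a, ε ≤ (γ a).2 - (γ a).1) :
    ∃ p : ℝ × ℝ,
      (∀ a, p ∈ convexHull ℝ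
        ({((0 : ℝ), (0 : ℝ)), γ a, ((1 : ℝ), (1 : ℝ)) - γ a,
          ((1 : ℝ), (1 : ℝ))} : Set (ℝ × ℝ))) ∧ p.1 < p.2 :=
  stmt13_general γ ε hε hbox hsep
end
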